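/- Let $R$ be a simply laced root system, $\varpi_1,\varpi_2$ minuscule weights, and $\lambda_i \in W\cdot\varpi_i$. If $\gamma_1,\dots,\gamma_k$ are pairwise orthogonal roots with $(\lambda_1,\gamma_i)(\lambda_2,\gamma_i) < 0$ for all $i$, then $d(\lambda_1,\lambda_2) \geq k$. Consequently, $d(\lambda_1,\lambda_2)$ equals the maximal length of such a sequence of pairwise orthogonal roots. -/

import Mathlib

open scoped RealInnerProductSpace

variable {E : Type*} [NormedAddCommGroup E] [InnerProductSpace ℝ E]

/-- The reflection in the root `α` (normalized so `(α,α) = 2`): `s_α(x) = x - (x,α) α`. -/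
noncomputable def rootReflection (α x : E) : E := x - ⟪x, α⟫ • α

/-- The Weyl group orbit `W · ϖ` of a weight `ϖ`, where `W` is generated by the reflections
in the roots belonging to `R`. -/
def weylOrbit (R : Set E) (ϖ : E) : Set E :=
  {lam : E | Relation.ReflTransGen (fun μ ν => ∃ α ∈ R, ν = rootReflection α μ) ϖ lam}

/-!
Write a point of `W · ϖ` as `ϖ - β₁ - ⋯ - βₙ` along a chain of reflections in roots `βᵢ`
pairing to `1` with the current point. Minusculity forces two adjacent roots of a chain to be
orthogonal (then they commute), to merge into a root, or to cancel; so in a chain of minimal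
length every `βᵢ` can be moved to the front and hence pairs to `1` with the starting point.
Starting from the dominant `ϖ₁` this makes every `βᵢ` positive, so `d(λ₁, λ₂)` is a natural
number; starting from `λ₂` towards a point closer to `λ₁` it yields a root `γ` with
`(λ₁, γ) = 1`, `(λ₂, γ) = -1`, and replacing `λ₂` by `s_γ λ₂ = λ₂ + γ` lowers `d` by one,
which builds the orthogonal family inductively. Conversely, reflecting `λ₂` in `k` orthogonal
roots as in the statement raises `(λ₁, λ₂)` by `k` while staying in `W · ϖ₂`.
-/

section Reflection

variable {α : E}

lemma inner_rootReflection_left (α x y : E) :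
    ⟪rootReflection α x, y⟫ = ⟪x, rootReflection α y⟫ := by
  simp only [rootReflection, inner_sub_left, inner_sub_right, real_inner_smul_left,
    real_inner_smul_right, real_inner_comm α y]
  ring

lemma inner_rootReflection_rootReflection (hα : ⟪α, α⟫ = 2) (x y : E) :
    ⟪rootReflection α x, rootReflection α y⟫ = ⟪x, y⟫ := by
  simp only [rootReflection, inner_sub_left, inner_sub_right, real_inner_smul_left,
    real_inner_smul_right, hα, real_inner_comm y α]
  ring

lemma rootReflection_eq_of_inner_eq {x : E} {c : ℝ} (h : ⟪x, α⟫ = c) :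
    rootReflection α x = x - c • α := by
  rw [rootReflection, h]

lemma rootReflection_rootReflection (hα : ⟪α, α⟫ = 2) (x : E) :
    rootReflection α (rootReflection α x) = x := by
  have h : ⟪rootReflection α x, α⟫ = -⟪x, α⟫ := by
    rw [rootReflection, inner_sub_left, real_inner_smul_left, hα]; ring
  rw [rootReflection_eq_of_inner_eq h, rootReflection]
  module

end Reflection

section Orbit

variable {R : Set E} {ϖ μ ν : E}

lemma rootReflection_mem_weylOrbit (hμ : μ ∈ weylOrbit R ϖ) {α : E} (hα : α ∈ R) :
    rootReflection α μ ∈ weylOrbit R ϖ :=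
  hμ.tail ⟨α, hα, rfl⟩

lemma mem_weylOrbit_trans (hμ : μ ∈ weylOrbit R ϖ) (hν : ν ∈ weylOrbit R μ) :
    ν ∈ weylOrbit R ϖ :=
  Relation.ReflTransGen.trans hμ hν

lemma mem_weylOrbit_symm (hlen : ∀ α ∈ R, ⟪α, α⟫ = 2) (hμ : μ ∈ weylOrbit R ϖ) :
    ϖ ∈ weylOrbit R μ := by
  induction hμ with
  | refl => exact .refl
  | tail _ hstep ih =>
    obtain ⟨α, hα, rfl⟩ := hstep
    exact ih.head ⟨α, hα, (rootReflection_rootReflection (hlen α hα) _).symm⟩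

lemma exists_mem_weylOrbit_inner_eq (hlen : ∀ α ∈ R, ⟪α, α⟫ = 2) (hμ : μ ∈ weylOrbit R ϖ)
    (x : E) : ∃ y ∈ weylOrbit R x, ⟪μ, y⟫ = ⟪ϖ, x⟫ := by
  induction hμ with
  | refl => exact ⟨x, .refl, rfl⟩
  | tail _ hstep ih =>
    obtain ⟨α, hα, rfl⟩ := hstep
    obtain ⟨y, hy, hxy⟩ := ih
    exact ⟨rootReflection α y, rootReflection_mem_weylOrbit hy hα,
      by rw [inner_rootReflection_rootReflection (hlen α hα), hxy]⟩

lemma sub_sum_inner_smul_mem_weylOrbit {ι : Type*} {γ : ι → E} (hγ : ∀ i, γ i ∈ R)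
    (horth : ∀ i j, i ≠ j → ⟪γ i, γ j⟫ = 0) (hμ : μ ∈ weylOrbit R ϖ) (s : Finset ι) :
    μ - ∑ i ∈ s, ⟪μ, γ i⟫ • γ i ∈ weylOrbit R ϖ := by
  classical
  induction s using Finset.induction_on with
  | empty => simpa using hμ
  | insert a s has ih =>
    have hinner : ⟪μ - ∑ i ∈ s, ⟪μ, γ i⟫ • γ i, γ a⟫ = ⟪μ, γ a⟫ := by
      rw [inner_sub_left, sum_inner, Finset.sum_eq_zero, sub_zero]
      intro i hi
      rw [real_inner_smul_left, horth i a (ne_of_mem_of_not_mem hi has), mul_zero]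
    have := rootReflection_mem_weylOrbit ih (hγ a)
    rw [Finset.sum_insert has]
    rwa [rootReflection_eq_of_inner_eq hinner, sub_sub, add_comm] at this

end Orbit

def IsMinuscule (R : Set E) (ϖ : E) : Prop :=
  ∀ α ∈ R, ⟪ϖ, α⟫ ∈ ({-1, 0, 1} : Set ℝ)

namespace IsMinuscule

variable {R : Set E} {ϖ μ α β : E}

lemma inner_eq (h : IsMinuscule R ϖ) (hα : α ∈ R) :
    ⟪ϖ, α⟫ = -1 ∨ ⟪ϖ, α⟫ = 0 ∨ ⟪ϖ, α⟫ = 1 :=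
  h α hα

lemma neg_one_le_inner (h : IsMinuscule R ϖ) (hα : α ∈ R) : -1 ≤ ⟪ϖ, α⟫ := by
  rcases h.inner_eq hα with h | h | h <;> rw [h] <;> norm_num

lemma inner_le_one (h : IsMinuscule R ϖ) (hα : α ∈ R) : ⟪ϖ, α⟫ ≤ 1 := by
  rcases h.inner_eq hα with h | h | h <;> rw [h] <;> norm_num

lemma reflect (hrefl : ∀ α ∈ R, ∀ β ∈ R, rootReflection α β ∈ R) (h : IsMinuscule R ϖ)
    (hα : α ∈ R) : IsMinuscule R (rootReflection α ϖ) := fun β hβ => by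
  rw [inner_rootReflection_left]
  exact h _ (hrefl α hα β hβ)

lemma of_mem_weylOrbit (hrefl : ∀ α ∈ R, ∀ β ∈ R, rootReflection α β ∈ R)
    (h : IsMinuscule R ϖ) (hμ : μ ∈ weylOrbit R ϖ) : IsMinuscule R μ := by
  induction hμ with
  | refl => exact h
  | tail _ hstep ih =>
    obtain ⟨α, hα, rfl⟩ := hstep
    exact ih.reflect hrefl hα

lemma inner_nonneg_of_inner_eq_one (hrefl : ∀ α ∈ R, ∀ β ∈ R, rootReflection α β ∈ R)
    (h : IsMinuscule R ϖ) (hα : α ∈ R) (hβ : β ∈ R) (hα1 : ⟪ϖ, α⟫ = 1) (hβ1 : ⟪ϖ, β⟫ = 1) :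
    0 ≤ ⟪α, β⟫ := by
  have hle := h.inner_le_one (hrefl β hβ α hα)
  rw [rootReflection, inner_sub_right, real_inner_smul_right, hα1, hβ1] at hle
  linarith

lemma mul_inner_eq_neg_one (h₁ : IsMinuscule R ϖ) (h₂ : IsMinuscule R μ) (hα : α ∈ R)
    (hneg : ⟪ϖ, α⟫ * ⟪μ, α⟫ < 0) : ⟪ϖ, α⟫ * ⟪μ, α⟫ = -1 := by
  rcases h₁.inner_eq hα with h | h | h <;> rcases h₂.inner_eq hα with h' | h' | h' <;>
    rw [h, h'] at hneg ⊢ <;> linarith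

end IsMinuscule

lemma inner_nonneg_of_inner_pos {R Rpos : Set E} {ϖ₁ ϖ₂ β : E} (hpos : R = Rpos ∪ (-Rpos))
    (hdom₁ : ∀ α ∈ Rpos, 0 ≤ ⟪ϖ₁, α⟫) (hdom₂ : ∀ α ∈ Rpos, 0 ≤ ⟪ϖ₂, α⟫) (hβ : β ∈ R)
    (h : 0 < ⟪ϖ₁, β⟫) : 0 ≤ ⟪ϖ₂, β⟫ := by
  rw [hpos] at hβ
  rcases hβ with hβ | hβ
  · exact hdom₂ β hβ
  · have := hdom₁ (-β) hβ
    rw [inner_neg_right] at this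
    linarith

/-- The path `μ, μ - β₁, μ - β₁ - β₂, …` through roots `βᵢ` pairing to `1` with the current
point; each step is then the reflection in `βᵢ`. -/
def IsRootChain (R : Set E) : E → List E → Prop
  | _, [] => True
  | μ, β :: L => β ∈ R ∧ ⟪μ, β⟫ = 1 ∧ IsRootChain R (μ - β) L

def IsReducedRootChain (R : Set E) (μ : E) (L : List E) : Prop :=
  IsRootChain R μ L ∧ ∀ L', IsRootChain R μ L' → L'.sum = L.sum → L.length ≤ L'.length

section Chain

variable {R : Set E} {ϖ μ β : E} {L : List E}

lemma IsRootChain.mem : ∀ {μ : E} {L : List E}, IsRootChain R μ L → β ∈ L → β ∈ R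
  | _, _ :: _, h, .head _ => h.1
  | _, _ :: _, h, .tail _ hβ => h.2.2.mem hβ

lemma IsRootChain.exists_reduced (h : IsRootChain R μ L) :
    ∃ L', IsReducedRootChain R μ L' ∧ L'.sum = L.sum := by
  classical
  have hex : ∃ n, ∃ L', IsRootChain R μ L' ∧ L'.sum = L.sum ∧ L'.length = n :=
    ⟨_, L, h, rfl, rfl⟩
  obtain ⟨L', hL', hsum, hlen⟩ := Nat.find_spec hex
  refine ⟨L', ⟨hL', fun L'' hL'' hsum' => ?_⟩, hsum⟩
  rw [hlen]
  exact Nat.find_min' hex ⟨L'', hL'', hsum'.trans hsum, rfl⟩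

lemma exists_isRootChain (hneg : ∀ α ∈ R, -α ∈ R)
    (hrefl : ∀ α ∈ R, ∀ β ∈ R, rootReflection α β ∈ R) (hϖ : IsMinuscule R ϖ)
    (hμ : μ ∈ weylOrbit R ϖ) : ∃ L, IsRootChain R ϖ L ∧ ϖ - L.sum = μ := by
  induction hμ using Relation.ReflTransGen.head_induction_on with
  | refl => exact ⟨[], trivial, by simp⟩
  | head hstep _ ih =>
    obtain ⟨α, hα, rfl⟩ := hstep
    obtain ⟨L, hL, hsum⟩ := ih (hϖ.reflect hrefl hα)
    rcases hϖ.inner_eq hα with h | h | h <;> rw [rootReflection_eq_of_inner_eq h] at hL hsum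
    · refine ⟨-α :: L, ⟨hneg α hα, by rw [inner_neg_right, h, neg_neg], ?_⟩, ?_⟩
      · simpa [sub_neg_eq_add] using hL
      · rw [← hsum, List.sum_cons]; module
    · exact ⟨L, by simpa using hL, by simpa using hsum⟩
    · refine ⟨α :: L, ⟨hα, h, by simpa using hL⟩, ?_⟩
      rw [← hsum, List.sum_cons]; module

lemma exists_isReducedRootChain (hneg : ∀ α ∈ R, -α ∈ R)
    (hrefl : ∀ α ∈ R, ∀ β ∈ R, rootReflection α β ∈ R) (hϖ : IsMinuscule R ϖ)
    (hμ : μ ∈ weylOrbit R ϖ) : ∃ L, IsReducedRootChain R ϖ L ∧ ϖ - L.sum = μ := by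
  obtain ⟨L, hL, rfl⟩ := exists_isRootChain hneg hrefl hϖ hμ
  obtain ⟨L', hL', hsum⟩ := hL.exists_reduced
  exact ⟨L', hL', by rw [hsum]⟩

namespace IsReducedRootChain

lemma tail {a : E} (h : IsReducedRootChain R μ (a :: L)) : IsReducedRootChain R (μ - a) L :=
  ⟨h.1.2.2, fun L' hL' hsum => by
    have := h.2 (a :: L') ⟨h.1.1, h.1.2.1, hL'⟩ (by simp [hsum])
    simpa using this⟩

lemma of_perm {L' : List E} (h : IsReducedRootChain R μ L) (hL' : IsRootChain R μ L')
    (hperm : L'.Perm L) : IsReducedRootChain R μ L' :=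
  ⟨hL', fun L'' hL'' hsum => hperm.length_eq ▸ h.2 L'' hL'' (hsum.trans hperm.sum_eq)⟩

/-- Adjacent roots of a reduced chain are orthogonal, hence can be swapped: otherwise they merge
into the root `a + b` or cancel (`b = -a`), shortening the chain. -/
lemma swap (hlen : ∀ α ∈ R, ⟪α, α⟫ = 2) (hrefl : ∀ α ∈ R, ∀ β ∈ R, rootReflection α β ∈ R)
    (hμ : IsMinuscule R μ) {a b : E} (h : IsReducedRootChain R μ (a :: b :: L)) :
    IsRootChain R μ (b :: a :: L) := by
  obtain ⟨⟨ha, hμa, hb, hμab, hL⟩, hmin⟩ := h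
  have hab : ⟪μ, b⟫ = 1 + ⟪a, b⟫ := by rw [inner_sub_left] at hμab; linarith
  rcases hμ.inner_eq hb with hμb | hμb | hμb
  · have hba : b = -a := by
      have hzero : ⟪a + b, a + b⟫ = 0 := by
        rw [inner_add_left, inner_add_right, inner_add_right, hlen a ha, hlen b hb,
          real_inner_comm a b]
        linarith
      exact eq_neg_of_add_eq_zero_right (inner_self_eq_zero.1 hzero)
    subst hba
    have := hmin L (by simpa using hL) (by simp)
    simp at this
  · have hmerge : a + b ∈ R := by
      have := hrefl a ha b hb
      rwa [rootReflection_eq_of_inner_eq (show ⟪b, a⟫ = -1 by rw [real_inner_comm]; linarith),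
        neg_one_smul, sub_neg_eq_add, add_comm] at this
    have := hmin ((a + b) :: L)
      ⟨hmerge, by rw [inner_add_right]; linarith, by rwa [← sub_sub]⟩ (by simp [add_assoc])
    simp at this
  · refine ⟨hb, hμb, ha, ?_, by rwa [sub_right_comm]⟩
    rw [inner_sub_left, real_inner_comm a b]
    linarith

lemma exists_perm_cons (hlen : ∀ α ∈ R, ⟪α, α⟫ = 2)
    (hrefl : ∀ α ∈ R, ∀ β ∈ R, rootReflection α β ∈ R) (hμ : IsMinuscule R μ)
    (h : IsReducedRootChain R μ L) (hβ : β ∈ L) :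
    ∃ L', IsRootChain R μ (β :: L') ∧ (β :: L').Perm L := by
  induction L generalizing μ with
  | nil => simp at hβ
  | cons a L ih =>
    rcases List.mem_cons.1 hβ with rfl | hβ
    · exact ⟨L, h.1, .refl _⟩
    have hμa : IsMinuscule R (μ - a) := by
      simpa [rootReflection_eq_of_inner_eq h.1.2.1] using hμ.reflect hrefl h.1.1
    obtain ⟨L', hL', hperm⟩ := ih hμa h.tail hβ
    have hperm' : (a :: β :: L').Perm (a :: L) := hperm.cons a
    have hred := h.of_perm (L' := a :: β :: L') ⟨h.1.1, h.1.2.1, hL'⟩ hperm'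
    exact ⟨a :: L', hred.swap hlen hrefl hμ, (List.Perm.swap a β L').trans hperm'⟩

lemma inner_eq_one (hlen : ∀ α ∈ R, ⟪α, α⟫ = 2)
    (hrefl : ∀ α ∈ R, ∀ β ∈ R, rootReflection α β ∈ R) (hμ : IsMinuscule R μ)
    (h : IsReducedRootChain R μ L) (hβ : β ∈ L) : ⟪μ, β⟫ = 1 := by
  obtain ⟨L', hL', -⟩ := h.exists_perm_cons hlen hrefl hμ hβ
  exact hL'.2.1

end IsReducedRootChain

end Chain

lemma inner_list_sum (x : E) (L : List E) : ⟪x, L.sum⟫ = (L.map (⟪x, ·⟫)).sum := by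
  induction L with
  | nil => simp
  | cons a L ih => simp [inner_add_right, ih]

lemma exists_nat_eq_inner_list_sum {x : E} :
    ∀ {L : List E}, (∀ β ∈ L, ⟪x, β⟫ = 0 ∨ ⟪x, β⟫ = 1) → ∃ n : ℕ, ⟪x, L.sum⟫ = n
  | [], _ => ⟨0, by simp⟩
  | a :: L, h => by
    obtain ⟨n, hn⟩ := exists_nat_eq_inner_list_sum fun β hβ => h β (List.mem_cons_of_mem a hβ)
    rcases h a List.mem_cons_self with ha | ha
    · exact ⟨n, by rw [List.sum_cons, inner_add_right, ha, hn, zero_add]⟩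
    · exact ⟨n + 1, by rw [List.sum_cons, inner_add_right, ha, hn]; push_cast; ring⟩

section Gap

variable {R Rpos : Set E} {ϖ₁ ϖ₂ μ₁ μ₂ : E}

theorem exists_nat_inner_sub_inner_eq (hpos : R = Rpos ∪ (-Rpos))
    (hlen : ∀ α ∈ R, ⟪α, α⟫ = 2) (hneg : ∀ α ∈ R, -α ∈ R)
    (hrefl : ∀ α ∈ R, ∀ β ∈ R, rootReflection α β ∈ R)
    (hdom₁ : ∀ α ∈ Rpos, 0 ≤ ⟪ϖ₁, α⟫) (hdom₂ : ∀ α ∈ Rpos, 0 ≤ ⟪ϖ₂, α⟫)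
    (hmin₁ : IsMinuscule R ϖ₁) (hmin₂ : IsMinuscule R ϖ₂)
    (h₁ : μ₁ ∈ weylOrbit R ϖ₁) (h₂ : μ₂ ∈ weylOrbit R ϖ₂) :
    ∃ n : ℕ, ⟪ϖ₁, ϖ₂⟫ - ⟪μ₁, μ₂⟫ = n := by
  obtain ⟨ν, hν, hϖν⟩ := exists_mem_weylOrbit_inner_eq hlen (mem_weylOrbit_symm hlen h₂) μ₁
  obtain ⟨L, hL, rfl⟩ :=
    exists_isReducedRootChain hneg hrefl hmin₁ (mem_weylOrbit_trans h₁ hν)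
  have hgap : ⟪ϖ₁, ϖ₂⟫ - ⟪μ₁, μ₂⟫ = ⟪ϖ₂, L.sum⟫ := by
    rw [real_inner_comm μ₂ μ₁, ← hϖν, inner_sub_right, real_inner_comm ϖ₂ ϖ₁]
    ring
  rw [hgap]
  refine exists_nat_eq_inner_list_sum fun β hβ => ?_
  have hβR := hL.1.mem hβ
  have hβ₂ := inner_nonneg_of_inner_pos hpos hdom₁ hdom₂ hβR
    (by rw [hL.inner_eq_one hlen hrefl hmin₁ hβ]; norm_num)
  rcases hmin₂.inner_eq hβR with h | h | h
  · linarith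
  · exact .inl h
  · exact .inr h

theorem exists_root_inner_eq_one_inner_eq_neg_one (hlen : ∀ α ∈ R, ⟪α, α⟫ = 2)
    (hneg : ∀ α ∈ R, -α ∈ R) (hrefl : ∀ α ∈ R, ∀ β ∈ R, rootReflection α β ∈ R)
    (hmin₁ : IsMinuscule R ϖ₁) (hmin₂ : IsMinuscule R ϖ₂)
    (h₁ : μ₁ ∈ weylOrbit R ϖ₁) (h₂ : μ₂ ∈ weylOrbit R ϖ₂) (hlt : ⟪μ₁, μ₂⟫ < ⟪ϖ₁, ϖ₂⟫) :
    ∃ γ ∈ R, ⟪μ₁, γ⟫ = 1 ∧ ⟪μ₂, γ⟫ = -1 := by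
  obtain ⟨ν, hν, hμν⟩ := exists_mem_weylOrbit_inner_eq hlen h₁ ϖ₂
  have hμ₁ := hmin₁.of_mem_weylOrbit hrefl h₁
  have hμ₂ := hmin₂.of_mem_weylOrbit hrefl h₂
  obtain ⟨L, hL, rfl⟩ := exists_isReducedRootChain hneg hrefl hμ₂
    (mem_weylOrbit_trans (mem_weylOrbit_symm hlen h₂) hν)
  obtain ⟨δ, hδL, hδ⟩ : ∃ δ ∈ L, ⟪μ₁, δ⟫ < 0 := by
    by_contra! hnonneg
    have : 0 ≤ ⟪μ₁, L.sum⟫ := by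
      rw [inner_list_sum]
      exact List.sum_nonneg (by simpa using hnonneg)
    rw [inner_sub_right] at hμν
    linarith
  have hδR := hL.1.mem hδL
  refine ⟨-δ, hneg δ hδR, ?_, ?_⟩
  · rw [inner_neg_right, neg_eq_iff_eq_neg]
    rcases hμ₁.inner_eq hδR with h | h | h <;> linarith
  · rw [inner_neg_right, hL.inner_eq_one hlen hrefl hμ₂ hδL]

theorem exists_orthogonal_roots (hlen : ∀ α ∈ R, ⟪α, α⟫ = 2)
    (hneg : ∀ α ∈ R, -α ∈ R) (hrefl : ∀ α ∈ R, ∀ β ∈ R, rootReflection α β ∈ R)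
    (hmin₁ : IsMinuscule R ϖ₁) (hmin₂ : IsMinuscule R ϖ₂) (h₁ : μ₁ ∈ weylOrbit R ϖ₁)
    (h₂ : μ₂ ∈ weylOrbit R ϖ₂) {d : ℕ} (hgap : ⟪ϖ₁, ϖ₂⟫ - ⟪μ₁, μ₂⟫ = d) :
    ∃ γ : Fin d → E, (∀ i, γ i ∈ R) ∧ (∀ i j, i ≠ j → ⟪γ i, γ j⟫ = 0) ∧
      ∀ i, ⟪μ₁, γ i⟫ = 1 ∧ ⟪μ₂, γ i⟫ = -1 := by
  have hμ₁ := hmin₁.of_mem_weylOrbit hrefl h₁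
  induction d generalizing μ₂ with
  | zero => exact ⟨Fin.elim0, fun i => i.elim0, fun i => i.elim0, fun i => i.elim0⟩
  | succ d ih =>
    push_cast at hgap
    obtain ⟨γ₀, hγ₀, h₁γ₀, h₂γ₀⟩ :=
      exists_root_inner_eq_one_inner_eq_neg_one hlen hneg hrefl hmin₁ hmin₂ h₁ h₂ (by linarith)
    have h₂' : μ₂ + γ₀ ∈ weylOrbit R ϖ₂ := by
      simpa [rootReflection_eq_of_inner_eq h₂γ₀] using rootReflection_mem_weylOrbit h₂ hγ₀
    obtain ⟨γ, hγ, horth, hγμ⟩ := ih h₂' (by rw [inner_add_right, h₁γ₀]; linarith)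
    have horth₀ : ∀ j, ⟪γ₀, γ j⟫ = 0 := fun j => by
      have := hμ₁.inner_nonneg_of_inner_eq_one hrefl hγ₀ (hγ j) h₁γ₀ (hγμ j).1
      have := (hmin₂.of_mem_weylOrbit hrefl h₂).neg_one_le_inner (hγ j)
      have := (hγμ j).2
      rw [inner_add_left] at this
      linarith
    refine ⟨Fin.cons γ₀ γ, Fin.forall_fin_succ.2 ⟨hγ₀, hγ⟩, ?_,
      Fin.forall_fin_succ.2 ⟨⟨h₁γ₀, h₂γ₀⟩, fun j => ⟨(hγμ j).1, ?_⟩⟩⟩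
    · intro i j hij
      induction i using Fin.cases <;> induction j using Fin.cases
      · exact absurd rfl hij
      · simpa using horth₀ _
      · simpa [real_inner_comm] using horth₀ _
      · simpa using horth _ _ (fun h => hij (congrArg _ h))
    · simpa [inner_add_left, horth₀ j] using (hγμ j).2

end Gap

/-- Let `R` be a simply laced root system, `ϖ₁, ϖ₂` minuscule weights, and
`λᵢ ∈ W·ϖᵢ`, with `d(λ₁,λ₂) = (ϖ₁,ϖ₂) - (λ₁,λ₂)`.  If `γ₁, …, γ_k` are pairwise orthogonal
roots with `(λ₁,γᵢ)(λ₂,γᵢ) < 0` for all `i`, then `d(λ₁,λ₂) ≥ k`.  Consequently `d(λ₁,λ₂)`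
equals the maximal length of such a sequence of pairwise orthogonal roots (witnessed by a
sequence of length exactly `d(λ₁,λ₂)`). -/
theorem statement8 (R Rpos : Set E) (ϖ₁ ϖ₂ lam₁ lam₂ : E)
    (hpos : R = Rpos ∪ (-Rpos))
    (hlen : ∀ α ∈ R, ⟪α, α⟫ = 2)
    (hneg : ∀ α ∈ R, -α ∈ R)
    (hrefl : ∀ α ∈ R, ∀ β ∈ R, rootReflection α β ∈ R)
    (hdom₁ : ∀ α ∈ Rpos, 0 ≤ ⟪ϖ₁, α⟫) (hdom₂ : ∀ α ∈ Rpos, 0 ≤ ⟪ϖ₂, α⟫)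
    (hmin₁ : ∀ α ∈ R, ⟪ϖ₁, α⟫ ∈ ({-1, 0, 1} : Set ℝ))
    (hmin₂ : ∀ α ∈ R, ⟪ϖ₂, α⟫ ∈ ({-1, 0, 1} : Set ℝ))
    (hlam₁ : lam₁ ∈ weylOrbit R ϖ₁) (hlam₂ : lam₂ ∈ weylOrbit R ϖ₂) :
    (∀ (k : ℕ) (γ : Fin k → E),
        (∀ i, γ i ∈ R) →
        (∀ i j, i ≠ j → ⟪γ i, γ j⟫ = 0) →
        (∀ i, ⟪lam₁, γ i⟫ * ⟪lam₂, γ i⟫ < 0) →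
        (k : ℝ) ≤ ⟪ϖ₁, ϖ₂⟫ - ⟪lam₁, lam₂⟫) ∧
    (∃ (d : ℕ) (γ : Fin d → E),
        (d : ℝ) = ⟪ϖ₁, ϖ₂⟫ - ⟪lam₁, lam₂⟫ ∧
        (∀ i, γ i ∈ R) ∧
        (∀ i j, i ≠ j → ⟪γ i, γ j⟫ = 0) ∧
        (∀ i, ⟪lam₁, γ i⟫ * ⟪lam₂, γ i⟫ < 0)) := by
  have hgap : ∀ μ ∈ weylOrbit R ϖ₂, ∃ n : ℕ, ⟪ϖ₁, ϖ₂⟫ - ⟪lam₁, μ⟫ = n := fun μ hμ =>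
    exists_nat_inner_sub_inner_eq hpos hlen hneg hrefl hdom₁ hdom₂ hmin₁ hmin₂ hlam₁ hμ
  refine ⟨fun k γ hγ horth hprod => ?_, ?_⟩
  · have hμ₁ := IsMinuscule.of_mem_weylOrbit hrefl hmin₁ hlam₁
    have hμ₂ := IsMinuscule.of_mem_weylOrbit hrefl hmin₂ hlam₂
    have hterm : ∀ i, ⟪lam₁, ⟪lam₂, γ i⟫ • γ i⟫ = -1 := fun i => by
      rw [real_inner_smul_right, mul_comm]
      exact hμ₁.mul_inner_eq_neg_one hμ₂ (hγ i) (hprod i)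
    obtain ⟨m, hm⟩ := hgap _ (sub_sum_inner_smul_mem_weylOrbit hγ horth hlam₂ .univ)
    rw [inner_sub_right, inner_sum, Finset.sum_congr rfl fun i _ => hterm i] at hm
    simp only [Finset.sum_const, Finset.card_univ, Fintype.card_fin, nsmul_eq_mul,
      mul_neg, mul_one] at hm
    linarith [m.cast_nonneg (α := ℝ)]
  · obtain ⟨n, hn⟩ := hgap lam₂ hlam₂
    obtain ⟨γ, hγ, horth, hγμ⟩ :=
      exists_orthogonal_roots hlen hneg hrefl hmin₁ hmin₂ hlam₁ hlam₂ hn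
    exact ⟨n, γ, hn.symm, hγ, horth, fun i => by rw [(hγμ i).1, (hγμ i).2]; norm_num⟩
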